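/- arXiv:2310.08809 — 3 statements merged into one kernel-verified Lean document; each statement's English description precedes it below -/
import Mathlib

section
/- Let k > 0, 0 < α < 1, and let V : [0,∞) → [0,∞) be differentiable with V'(t) ≤ -k·V(t)^α whenever V(t) > 0. If V(0) > 0 and V is continuous and nonincreasing, then V(T) = 0 for some T ≤ V(0)^{1-α} / (k·(1-α)). -/
theorem finite_time_stability
    (k α : ℝ) (hk : 0 < k) (hα0 : 0 < α) (hα1 : α < 1)
    (V : ℝ → ℝ) (hV : Differentiable ℝ V)
    (hVnonneg : ∀ t, 0 ≤ t → 0 ≤ V t)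
    (hV' : ∀ t, 0 ≤ t → 0 < V t → deriv V t ≤ -k * (V t) ^ α)
    (hV0 : 0 < V 0)
    (hmono : ∀ s t, 0 ≤ s → s ≤ t → V t ≤ V s) :
    ∃ T, 0 ≤ T ∧ T ≤ (V 0) ^ (1 - α) / (k * (1 - α)) ∧ V T = 0 := by
  set p : ℝ := 1 - α with hp
  have hpPos : 0 < p := by simp [hp]; linarith
  have hc : 0 < k * p := mul_pos hk hpPos
  set T : ℝ := (V 0) ^ p / (k * p) with hT
  have hTpos : 0 < T := div_pos (Real.rpow_pos_of_pos hV0 p) hc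
  refine ⟨T, hTpos.le, le_refl _, ?_⟩
  by_contra hne
  have hVT : 0 < V T := lt_of_le_of_ne (hVnonneg T hTpos.le) (Ne.symm hne)
  -- V positive on [0, T]
  have hpos : ∀ t ∈ Set.Icc (0:ℝ) T, 0 < V t := fun t ht =>
    lt_of_lt_of_le hVT (hmono t T ht.1 ht.2)
  -- g t = V t ^ p + k * p * t is antitone on [0,T]
  set g : ℝ → ℝ := fun t => V t ^ p + k * p * t with hg
  have hderiv : ∀ t ∈ Set.Icc (0:ℝ) T, HasDerivAt g
      (deriv V t * p * V t ^ (p - 1) + k * p) t := by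
    intro t ht
    have h1 : HasDerivAt (fun t => V t ^ p) (deriv V t * p * V t ^ (p - 1)) t :=
      (hV t).hasDerivAt.rpow_const (Or.inl (hpos t ht).ne')
    have h2 : HasDerivAt (fun t => k * p * t) (k * p) t := by
      simpa using (hasDerivAt_id t).const_mul (k * p)
    exact h1.add h2
  have hcont : ContinuousOn g (Set.Icc 0 T) := by
    intro t ht
    exact ((hderiv t ht).continuousAt).continuousWithinAt
  have hanti : AntitoneOn g (Set.Icc 0 T) := by
    apply antitoneOn_of_deriv_nonpos (convex_Icc 0 T) hcont
    · intro t ht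
      rw [interior_Icc] at ht
      exact ((hderiv t ⟨ht.1.le, ht.2.le⟩).differentiableAt).differentiableWithinAt
    · intro t ht
      rw [interior_Icc] at ht
      have ht' : t ∈ Set.Icc (0:ℝ) T := ⟨ht.1.le, ht.2.le⟩
      rw [(hderiv t ht').deriv]
      have hVt := hpos t ht'
      have hb := hV' t ht.1.le hVt
      have hmul : deriv V t * (p * V t ^ (p - 1)) ≤
          (-k * V t ^ α) * (p * V t ^ (p - 1)) := by
        apply mul_le_mul_of_nonneg_right hb
        positivity
      have hcancel : V t ^ α * V t ^ (p - 1) = 1 := by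
        rw [← Real.rpow_add hVt]
        norm_num [hp]
      nlinarith [hmul, hcancel]
  have hkey : g T ≤ g 0 := hanti ⟨le_refl 0, hTpos.le⟩ ⟨hTpos.le, le_refl T⟩ hTpos.le
  have hgT : g T = V T ^ p + V 0 ^ p := by
    simp only [hg, hT]
    field_simp
  have hg0 : g 0 = V 0 ^ p := by simp [hg]
  have : V T ^ p ≤ 0 := by rw [hgT, hg0] at hkey; linarith
  exact absurd this (not_le.mpr (Real.rpow_pos_of_pos hVT p))
end

section
/- Let c > 0, 0 < α < 1, and let (a_n) be a sequence of nonnegative reals satisfying a_{n+1} ≤ a_n - c·a_n^α for all n. Then for every n such that a_0, a_1, …, a_n are all strictly positive, a_n^{1-α} ≤ a_0^{1-α} - c·(1-α)·n. -/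
lemma key_step (c α x y : ℝ) (hc : 0 < c) (hα0 : 0 < α) (hα1 : α < 1)
    (hx : 0 < x) (hy : 0 < y) (h : y ≤ x - c * x ^ α) :
    y ^ (1 - α) ≤ x ^ (1 - α) - c * (1 - α) := by
  set t := 1 - c * x ^ (α - 1) with ht_def
  have hx1 : x ^ (α - 1) * x = x ^ α := by
    rw [← Real.rpow_add_one hx.ne']; ring_nf
  have hxt : x * t = x - c * x ^ α := by
    rw [ht_def, mul_sub, mul_one,
      show x * (c * x ^ (α - 1)) = c * (x ^ (α - 1) * x) by ring, hx1]
  have hxty : y ≤ x * t := by rw [hxt]; exact h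
  have hxtpos : 0 < x * t := hy.trans_le hxty
  have htpos : 0 < t := by nlinarith
  have hxα1pos : 0 < x ^ (α - 1) := Real.rpow_pos_of_pos hx _
  have ht1 : t ≤ 1 := by nlinarith
  have hxpow : 0 < x ^ (1 - α) := Real.rpow_pos_of_pos hx _
  have hpow1 : x ^ (1 - α) * x ^ (α - 1) = 1 := by
    rw [← Real.rpow_add hx]; norm_num
  have hbern : t ^ (1 - α) ≤ 1 + (1 - α) * (t - 1) := by
    have := rpow_one_add_le_one_add_mul_self (s := t - 1) (p := 1 - α)
      (by linarith) (by linarith) (by linarith)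
    simpa using this
  calc y ^ (1 - α) ≤ (x * t) ^ (1 - α) :=
        Real.rpow_le_rpow hy.le hxty (by linarith)
    _ = x ^ (1 - α) * t ^ (1 - α) := Real.mul_rpow hx.le htpos.le
    _ ≤ x ^ (1 - α) * (1 + (1 - α) * (t - 1)) :=
        mul_le_mul_of_nonneg_left hbern hxpow.le
    _ = x ^ (1 - α) - c * (1 - α) := by
        rw [ht_def]
        linear_combination c * (α - 1) * hpow1

theorem discrete_lyapunov_decrease
    (c α : ℝ) (hc : 0 < c) (hα0 : 0 < α) (hα1 : α < 1)
    (a : ℕ → ℝ) (hnonneg : ∀ n, 0 ≤ a n)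
    (hstep : ∀ n, a (n + 1) ≤ a n - c * (a n) ^ α) :
    ∀ n, (∀ i ≤ n, 0 < a i) →
      (a n) ^ (1 - α) ≤ (a 0) ^ (1 - α) - c * (1 - α) * n := by
  intro n
  induction n with
  | zero => intro _; simp
  | succ n ih =>
    intro hpos
    have ih' := ih (fun i hi => hpos i (hi.trans (Nat.le_succ n)))
    have hk := key_step c α (a n) (a (n + 1)) hc hα0 hα1
      (hpos n (Nat.le_succ n)) (hpos (n + 1) le_rfl) (hstep n)
    push_cast
    linarith
end

section
/- Let c > 0, 0 < α < 1, and let (a_n) be a sequence of nonnegative reals with a_{n+1} ≤ a_n - c·a_n^α for all n. Then (a_n) is nonincreasing, and if a_0 > 0 there exists N ≤ ⌈a_0^{1-α} / (c·(1-α))⌉ with a_N^{1-α} ≤ c·(1-α) (i.e., the sequence drops below the threshold (c(1-α))^{1/(1-α)} within finitely many steps bounded explicitly by a_0). -/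
lemma rpow_drop_step (c α x y : ℝ) (hc : 0 < c) (hα0 : 0 < α) (hα1 : α < 1)
    (hx : 0 < x) (hy : 0 ≤ y) (h : y ≤ x - c * x ^ α) :
    y ^ (1 - α) ≤ x ^ (1 - α) - c * (1 - α) := by
  have hβ : (0:ℝ) < 1 - α := by linarith
  have hxβ : (0:ℝ) < x ^ (1 - α) := Real.rpow_pos_of_pos hx _
  have hs : (-1:ℝ) ≤ y / x - 1 := by
    have : (0:ℝ) ≤ y / x := div_nonneg hy hx.le
    linarith
  have hB := rpow_one_add_le_one_add_mul_self hs hβ.le (by linarith : (1:ℝ) - α ≤ 1)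
  have h1 : (y / x) ^ (1 - α) ≤ 1 + (1 - α) * (y / x - 1) := by
    have e : (1:ℝ) + (y / x - 1) = y / x := by ring
    rwa [e] at hB
  have hdiv : (y / x) ^ (1 - α) = y ^ (1 - α) / x ^ (1 - α) :=
    Real.div_rpow hy hx.le _
  rw [hdiv, div_le_iff₀ hxβ] at h1
  -- h1 : y ^ (1-α) ≤ (1 + (1-α)*(y/x - 1)) * x ^ (1-α)
  have eP : x ^ (1 - α) / x = x ^ (-α) := by
    have := Real.rpow_sub hx (1 - α) 1
    rw [Real.rpow_one] at this
    rw [← this]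
    norm_num
  have hP : (0:ℝ) < x ^ (-α) := Real.rpow_pos_of_pos hx _
  have ePQ : x ^ (-α) * x ^ α = 1 := by
    rw [← Real.rpow_add hx]; norm_num
  have h2 : y ^ (1 - α) ≤ x ^ (1 - α) + (1 - α) * (x ^ (-α) * (y - x)) := by
    have e : (1 + (1 - α) * (y / x - 1)) * x ^ (1 - α)
        = x ^ (1 - α) + (1 - α) * ((x ^ (1 - α) / x) * (y - x)) := by
      field_simp
    rw [e, eP] at h1
    exact h1
  have h3 : x ^ (-α) * (y - x) ≤ -c := by
    have : y - x ≤ -(c * x ^ α) := by linarith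
    calc x ^ (-α) * (y - x) ≤ x ^ (-α) * (-(c * x ^ α)) :=
          mul_le_mul_of_nonneg_left this hP.le
      _ = -c := by
          rw [mul_neg, show x ^ (-α) * (c * x ^ α) = c * (x ^ (-α) * x ^ α) by ring,
            ePQ, mul_one]
  nlinarith

theorem discrete_finite_time_convergence
    (c α : ℝ) (hc : 0 < c) (hα0 : 0 < α) (hα1 : α < 1)
    (a : ℕ → ℝ) (hnonneg : ∀ n, 0 ≤ a n)
    (hstep : ∀ n, a (n + 1) ≤ a n - c * (a n) ^ α) :
    (∀ n, a (n + 1) ≤ a n) ∧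
    (0 < a 0 → ∃ N, N ≤ ⌈(a 0) ^ (1 - α) / (c * (1 - α))⌉₊ ∧
      (a N) ^ (1 - α) ≤ c * (1 - α)) := by
  have hβ : (0:ℝ) < 1 - α := by linarith
  have hcβ : (0:ℝ) < c * (1 - α) := mul_pos hc hβ
  constructor
  · intro n
    have := hstep n
    have : (0:ℝ) ≤ c * (a n) ^ α := mul_nonneg hc.le (Real.rpow_nonneg (hnonneg n) _)
    linarith [hstep n]
  · intro h0
    by_contra hcon
    push_neg at hcon
    set M := ⌈(a 0) ^ (1 - α) / (c * (1 - α))⌉₊ with hM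
    -- every n ≤ M has a n ^ (1-α) > c*(1-α), hence a n > 0
    have hbig : ∀ n ≤ M, c * (1 - α) < (a n) ^ (1 - α) := by
      intro n hn
      exact hcon n hn
    have hpos : ∀ n ≤ M, 0 < a n := by
      intro n hn
      rcases (hnonneg n).lt_or_eq with h | h
      · exact h
      · exfalso
        have := hbig n hn
        rw [← h, Real.zero_rpow (by positivity : (1:ℝ) - α ≠ 0)] at this
        linarith
    have hdec : ∀ n ≤ M, (a n) ^ (1 - α) ≤ (a 0) ^ (1 - α) - n * (c * (1 - α)) := by
      intro n hn
      induction n with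
      | zero => simp
      | succ k ih =>
        have hk : k ≤ M := Nat.le_of_succ_le hn
        have hak : 0 < a k := hpos k hk
        have := rpow_drop_step c α (a k) (a (k + 1)) hc hα0 hα1 hak
          (hnonneg (k + 1)) (hstep k)
        have ihk := ih hk
        push_cast
        push_cast at ihk
        linarith
    have hMle : (a 0) ^ (1 - α) / (c * (1 - α)) ≤ (M : ℝ) := Nat.le_ceil _
    have : (a 0) ^ (1 - α) ≤ (M : ℝ) * (c * (1 - α)) := by
      rw [div_le_iff₀ hcβ] at hMle
      linarith
    have hfin := hdec M le_rfl
    have hb := hbig M le_rfl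
    linarith
end
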